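/- Let r, t ∈ ℕ, let H be a graph of radius at most r, and let S ⊆ V(H) with |S| ≥ t^r + 1. Then there exists a vertex u ∈ V(H) such that there are t vertices in S, all distinct from u, reachable from u by pairwise internally vertex-disjoint paths of length at most r. -/

import Mathlib

/-- Two vertices `u`, `v` of a graph `G` are `k`-near-twins if the symmetric
difference of their (open) neighborhoods has size at most `k`. -/
def nearTwin {V : Type*} (G : SimpleGraph V) (k : ℕ) (u v : V) : Prop :=
  (symmDiff (G.neighborSet u) (G.neighborSet v)).ncard ≤ k

/-- The `k`-near-twin graph of `G`: same vertex set, edges between distinct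
`k`-near-twins. -/
def ntGraph {V : Type*} (G : SimpleGraph V) (k : ℕ) : SimpleGraph V where
  Adj u v := u ≠ v ∧ nearTwin G k u v
  symm := by
    refine ⟨?_⟩
    rintro u v ⟨h1, h2⟩
    refine ⟨h1.symm, ?_⟩
    unfold nearTwin at h2 ⊢
    rwa [symmDiff_comm]
  loopless := ⟨fun v h => h.1 rfl⟩


namespace Stmt11Aux
open SimpleGraph
open scoped Classical

variable {V : Type*} (H : SimpleGraph V) (c : V) (hconn : ∀ v, H.Reachable c v)
include hconn

lemma exists_par {v : V} (hv : v ≠ c) :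
    ∃ w, H.Adj w v ∧ H.dist c w + 1 = H.dist c v := by
  obtain ⟨p, hp⟩ := (hconn v).exists_walk_length_eq_dist
  cases hpr : p.reverse with
  | nil => exact absurd rfl hv
  | cons hadj q =>
    rename_i w
    refine ⟨w, hadj.symm, ?_⟩
    have h1 : H.dist c w ≤ q.length := by
      simpa using SimpleGraph.dist_le q.reverse
    have h2 : H.dist c v ≤ H.dist c w + 1 := by
      obtain ⟨q', hq'⟩ := (hconn w).exists_walk_length_eq_dist
      have := SimpleGraph.dist_le (q'.concat hadj.symm)
      simpa [SimpleGraph.Walk.length_concat, hq'] using this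
    have h3 : p.length = q.length + 1 := by
      have := congrArg SimpleGraph.Walk.length hpr
      simpa using this
    omega

noncomputable def par (v : V) : V :=
  if h : v = c then c else (exists_par H c hconn h).choose

lemma adj_par {v : V} (hv : v ≠ c) : H.Adj (par H c hconn v) v := by
  rw [par, dif_neg hv]
  exact (exists_par H c hconn hv).choose_spec.1

lemma dist_par {v : V} (hv : v ≠ c) :
    H.dist c (par H c hconn v) + 1 = H.dist c v := by
  rw [par, dif_neg hv]
  exact (exists_par H c hconn hv).choose_spec.2

noncomputable def anc (n : ℕ) (v : V) : V := (par H c hconn)^[n] v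

@[simp] lemma anc_zero (v : V) : anc H c hconn 0 v = v := rfl

lemma anc_succ (n : ℕ) (v : V) :
    anc H c hconn (n + 1) v = par H c hconn (anc H c hconn n v) :=
  Function.iterate_succ_apply' _ n v

lemma anc_anc (m n : ℕ) (v : V) :
    anc H c hconn m (anc H c hconn n v) = anc H c hconn (m + n) v :=
  (Function.iterate_add_apply _ m n v).symm

lemma eq_c_of_dist_eq_zero {v : V} (h : H.dist c v = 0) : v = c :=
  (((hconn v).dist_eq_zero_iff).mp h).symm

lemma dist_anc : ∀ (n : ℕ) (v : V), n ≤ H.dist c v →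
    H.dist c (anc H c hconn n v) = H.dist c v - n := by
  intro n
  induction n with
  | zero => simp
  | succ n ih =>
    intro v h
    have ihv := ih v (by omega)
    have hne : anc H c hconn n v ≠ c := by
      intro he
      rw [he, SimpleGraph.dist_self] at ihv
      omega
    have := dist_par H c hconn hne
    rw [anc_succ]
    omega

lemma anc_ne {n : ℕ} {v : V} (h : n < H.dist c v) : anc H c hconn n v ≠ c := by
  intro he
  have := dist_anc H c hconn n v (by omega)
  rw [he, SimpleGraph.dist_self] at this
  omega

lemma anc_dist_self (v : V) : anc H c hconn (H.dist c v) v = c := by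
  apply eq_c_of_dist_eq_zero H c hconn
  have := dist_anc H c hconn (H.dist c v) v le_rfl
  omega

noncomputable def treeWalk : (n : ℕ) → (v : V) → n ≤ H.dist c v →
    H.Walk (anc H c hconn n v) v
  | 0, v, _ => Walk.nil
  | (n+1), v, h =>
    (Walk.cons (adj_par H c hconn (anc_ne H c hconn (by omega)))
      (treeWalk n v (by omega))).copy (anc_succ H c hconn n v).symm rfl

@[simp] lemma length_treeWalk : ∀ (n : ℕ) (v : V) (h : n ≤ H.dist c v),
    (treeWalk H c hconn n v h).length = n := by
  intro n
  induction n with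
  | zero => intro v h; rfl
  | succ n ih => intro v h; simp [treeWalk, ih]

lemma mem_support_treeWalk : ∀ (n : ℕ) (v : V) (h : n ≤ H.dist c v) (x : V),
    x ∈ (treeWalk H c hconn n v h).support → ∃ j ≤ n, x = anc H c hconn j v := by
  intro n
  induction n with
  | zero =>
    intro v h x hx
    simp [treeWalk] at hx
    exact ⟨0, le_rfl, by simp [hx]⟩
  | succ n ih =>
    intro v h x hx
    simp only [treeWalk, Walk.support_copy, Walk.support_cons, List.mem_cons] at hx
    rcases hx with hx | hx
    · exact ⟨n + 1, le_rfl, by rw [hx, anc_succ]⟩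
    · obtain ⟨j, hj, hjx⟩ := ih v (by omega) x hx
      exact ⟨j, by omega, hjx⟩

lemma isPath_treeWalk : ∀ (n : ℕ) (v : V) (h : n ≤ H.dist c v),
    (treeWalk H c hconn n v h).IsPath := by
  intro n
  induction n with
  | zero => intro v h; simp [treeWalk]
  | succ n ih =>
    intro v h
    simp only [treeWalk, Walk.isPath_copy, Walk.cons_isPath_iff]
    refine ⟨ih v (by omega), ?_⟩
    intro hmem
    obtain ⟨j, hj, hjx⟩ := mem_support_treeWalk H c hconn n v (by omega) _ hmem
    rw [← anc_succ] at hjx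
    have h1 := dist_anc H c hconn (n + 1) v h
    have h2 := dist_anc H c hconn j v (by omega)
    rw [hjx] at h1
    omega

noncomputable def ch (u s : V) : V :=
  anc H c hconn (H.dist c s - H.dist c u - 1) s

lemma ch_eq (u s : V) :
    ch H c hconn u s = anc H c hconn (H.dist c s - H.dist c u - 1) s := rfl

end Stmt11Aux

open Stmt11Aux in
lemma stmt11_key {V : Type*} [DecidableEq V] (H : SimpleGraph V) (c : V)
    (hconn : ∀ v, H.Reachable c v) (t : ℕ) (ht : 1 ≤ t) (r : ℕ) (u : V) (S : Finset V)
    (hsub : ∀ s ∈ S, H.dist c u ≤ H.dist c s ∧ H.dist c s ≤ H.dist c u + r ∧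
      anc H c hconn (H.dist c s - H.dist c u) s = u)
    (hS : t ^ r + 1 ≤ S.card) :
    ∃ (u' : V) (f : Fin t → V) (p : ∀ i, H.Walk u' (f i)),
      Function.Injective f ∧ (∀ i, f i ∈ S ∧ f i ≠ u') ∧
      (∀ i, (p i).IsPath ∧ (p i).length ≤ r) ∧
      (∀ i j, i ≠ j → ∀ x, x ∈ (p i).support → x ∈ (p j).support → x = u') := by
  induction r generalizing u S with
  | zero =>
    exfalso
    have hsub1 : S ⊆ {u} := by
      intro s hs
      obtain ⟨h1, h2, h3⟩ := hsub s hs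
      have h0 : H.dist c s - H.dist c u = 0 := by omega
      rw [h0] at h3
      simpa using h3
    have := Finset.card_le_card hsub1
    simp only [Finset.card_singleton] at this
    simp only [pow_zero] at hS
    omega
  | succ r ih =>
    have hS' : ∀ s ∈ S.erase u, H.dist c u < H.dist c s ∧
        H.dist c s ≤ H.dist c u + (r + 1) ∧
        anc H c hconn (H.dist c s - H.dist c u) s = u := by
      intro s hs
      obtain ⟨h1, h2, h3⟩ := hsub s (Finset.mem_of_mem_erase hs)
      have hne : s ≠ u := Finset.ne_of_mem_erase hs
      refine ⟨?_, h2, h3⟩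
      rcases lt_or_eq_of_le h1 with h | h
      · exact h
      · exfalso
        apply hne
        have h0 : H.dist c s - H.dist c u = 0 := by omega
        rw [h0] at h3
        simpa using h3
    have hch_dist : ∀ s, H.dist c u < H.dist c s →
        H.dist c (ch H c hconn u s) = H.dist c u + 1 := by
      intro s hs
      rw [ch_eq]
      have := dist_anc H c hconn (H.dist c s - H.dist c u - 1) s (by omega)
      omega
    by_cases hT : t ≤ ((S.erase u).image (ch H c hconn u)).card
    · -- at least t distinct children: pick representatives
      obtain ⟨T', hT'sub, hT'card⟩ := Finset.exists_subset_card_eq hT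
      have hcardT' : Fintype.card T' = t := by
        rw [Fintype.card_coe]; exact hT'card
      set e := Fintype.equivFinOfCardEq hcardT' with he
      have hrep : ∀ i : Fin t, ∃ s, s ∈ S.erase u ∧
          ch H c hconn u s = (e.symm i : V) := by
        intro i
        have := hT'sub (e.symm i).2
        rw [Finset.mem_image] at this
        obtain ⟨s, hs, hcs⟩ := this
        exact ⟨s, hs, hcs⟩
      choose g hg1 hg2 using hrep
      have hgS : ∀ i, H.dist c u < H.dist c (g i) ∧
          H.dist c (g i) ≤ H.dist c u + (r + 1) ∧
          anc H c hconn (H.dist c (g i) - H.dist c u) (g i) = u :=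
        fun i => hS' (g i) (hg1 i)
      refine ⟨u, g, fun i => (treeWalk H c hconn (H.dist c (g i) - H.dist c u) (g i)
          (Nat.sub_le _ _)).copy (hgS i).2.2 rfl, ?_, ?_, ?_, ?_⟩
      · intro i j hij
        have hcc : (e.symm i : V) = (e.symm j : V) := by
          rw [← hg2 i, ← hg2 j, hij]
        have := e.symm.injective (Subtype.ext hcc)
        simpa using this
      · intro i
        exact ⟨Finset.mem_of_mem_erase (hg1 i), Finset.ne_of_mem_erase (hg1 i)⟩
      · intro i
        constructor
        · simpa using isPath_treeWalk H c hconn _ _ _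
        · have hl := length_treeWalk H c hconn (H.dist c (g i) - H.dist c u) (g i)
            (Nat.sub_le _ _)
          simp only [SimpleGraph.Walk.length_copy]
          rw [hl]
          have := (hgS i).2.1
          omega
      · intro i j hij x hxi hxj
        by_contra hxu
        have hkey : ∀ k : Fin t,
            x ∈ ((treeWalk H c hconn (H.dist c (g k) - H.dist c u) (g k)
              (Nat.sub_le _ _)).copy (hgS k).2.2 rfl).support →
            ch H c hconn u x = (e.symm k : V) := by
          intro k hxk
          rw [SimpleGraph.Walk.support_copy] at hxk
          obtain ⟨a, ha, hax⟩ := mem_support_treeWalk H c hconn _ _ _ x hxk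
          have hgk := hgS k
          have haneq : a ≠ H.dist c (g k) - H.dist c u := by
            intro haeq
            apply hxu
            rw [hax, haeq, hgk.2.2]
          have hdx : H.dist c x = H.dist c (g k) - a := by
            rw [hax]
            exact dist_anc H c hconn a (g k) (by omega)
          have hstep : anc H c hconn (H.dist c x - H.dist c u - 1) x
              = anc H c hconn ((H.dist c x - H.dist c u - 1) + a) (g k) := by
            rw [← anc_anc, ← hax]
          have harith : (H.dist c x - H.dist c u - 1) + a
              = H.dist c (g k) - H.dist c u - 1 := by omega
          rw [ch_eq, hstep, harith, ← ch_eq, hg2 k]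
        exact hij (by
          have hcc := (hkey i hxi).symm.trans (hkey j hxj)
          have := e.symm.injective (Subtype.ext hcc)
          simpa using this)
    · -- few children: pigeonhole into one child's subtree
      push_neg at hT
      have hmaps : ∀ s ∈ S.erase u,
          ch H c hconn u s ∈ (S.erase u).image (ch H c hconn u) :=
        fun s hs => Finset.mem_image_of_mem _ hs
      have htr : 1 ≤ t ^ r := Nat.one_le_pow _ _ (by omega)
      have hcard : ((S.erase u).image (ch H c hconn u)).card * t ^ r
          < (S.erase u).card := by
        have h1 : t ^ (r + 1) ≤ (S.erase u).card := by
          have := Finset.pred_card_le_card_erase (s := S) (a := u)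
          omega
        have h2 : ((S.erase u).image (ch H c hconn u)).card * t ^ r
            ≤ (t - 1) * t ^ r := Nat.mul_le_mul_right _ (by omega)
        have h5 : (t - 1) * t ^ r = t * t ^ r - t ^ r := Nat.sub_one_mul t (t ^ r)
        have h4 : t ^ (r + 1) = t * t ^ r := by ring
        have h6 : t ^ r ≤ t * t ^ r := Nat.le_mul_of_pos_left _ (by omega)
        omega
      obtain ⟨y, hy, hycard⟩ :=
        Finset.exists_lt_card_fiber_of_mul_lt_card_of_maps_to hmaps hcard
      obtain ⟨s₀, hs₀, hys₀⟩ := Finset.mem_image.mp hy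
      have hdy : H.dist c y = H.dist c u + 1 := by
        rw [← hys₀]; exact hch_dist s₀ (hS' s₀ hs₀).1
      refine (ih y ((S.erase u).filter (fun x => ch H c hconn u x = y)) ?_
        (by omega)).imp ?_
      · intro s hs
        rw [Finset.mem_filter] at hs
        obtain ⟨hs1, hs2⟩ := hs
        obtain ⟨h1, h2, h3⟩ := hS' s hs1
        refine ⟨by omega, by omega, ?_⟩
        have h0 : H.dist c s - H.dist c y = H.dist c s - H.dist c u - 1 := by omega
        rw [h0, ← ch_eq]
        exact hs2
      · rintro u' ⟨f, p, h1, h2, h3, h4⟩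
        refine ⟨f, p, h1, ?_, ?_, h4⟩
        · intro i
          have hm := (h2 i).1
          rw [Finset.mem_filter] at hm
          exact ⟨Finset.mem_of_mem_erase hm.1, (h2 i).2⟩
        · intro i
          exact ⟨(h3 i).1, le_trans (h3 i).2 (by omega)⟩

/-- If `H` has radius at most `r` and `S ⊆ V(H)` has size at least `t^r + 1`, then some
vertex `u` reaches `t` vertices of `S`, all distinct from `u`, by pairwise internally
vertex-disjoint paths of length at most `r`. -/
theorem stmt11 {V : Type*} [Fintype V] [DecidableEq V] (H : SimpleGraph V) (r t : ℕ)
    (hrad : ∃ c : V, ∀ u : V, ∃ p : H.Walk c u, p.length ≤ r)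
    (S : Finset V) (hS : t ^ r + 1 ≤ S.card) :
    ∃ (u : V) (f : Fin t → V) (p : ∀ i, H.Walk u (f i)),
      Function.Injective f ∧ (∀ i, f i ∈ S ∧ f i ≠ u) ∧
      (∀ i, (p i).IsPath ∧ (p i).length ≤ r) ∧
      (∀ i j, i ≠ j → ∀ x, x ∈ (p i).support → x ∈ (p j).support → x = u) := by
  obtain ⟨c, hc⟩ := hrad
  rcases Nat.eq_zero_or_pos t with ht | ht
  · subst ht
    exact ⟨c, Fin.elim0, fun i => i.elim0, by intro a; exact a.elim0,
      fun i => i.elim0, fun i => i.elim0, fun i j _ => i.elim0⟩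
  · have hconn : ∀ v, H.Reachable c v := fun v => ⟨(hc v).choose⟩
    apply stmt11_key H c hconn t ht r c S _ hS
    intro s hs
    have hd0 : H.dist c c = 0 := SimpleGraph.dist_self
    have hdr : H.dist c s ≤ r := by
      obtain ⟨p, hp⟩ := hc s
      exact le_trans (SimpleGraph.dist_le p) hp
    refine ⟨by omega, by omega, ?_⟩
    rw [hd0, Nat.sub_zero]
    exact Stmt11Aux.anc_dist_self H c hconn s
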